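/- arXiv:1805.05997 — 2 statements merged into one kernel-verified Lean document; each statement's English description precedes it below -/
import Mathlib

section
/- Let Γ be a subgroup of the group of disk Möbius transformations that is cocompact, i.e., there is a compact set K contained in the open unit disk 𝔻 = {z ∈ ℂ : |z| < 1} with ⋃_{γ∈Γ} γ(K) = 𝔻. Let α_n (n ∈ ℕ) and α be Γ-invariant Radon measures on G such that α_n converges weak* to α. Then α_n converges uniformly weak* to α: for every continuous compactly supported function ξ : G → ℝ, the supremum over all disk Möbius transformations φ of |∫_G ξ∘φ dα_n − ∫_G ξ∘φ dα| tends to 0 as n → ∞. -/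
open MeasureTheory Filter Topology Set
open scoped ENNReal

noncomputable section

instance : MeasurableSpace Circle := borel Circle
instance : BorelSpace Circle := ⟨rfl⟩

/-- Four points of the unit circle in (strict) counterclockwise order. -/
def Ccw4 (a b c d : Circle) : Prop :=
  ∃ t₁ t₂ t₃ t₄ : ℝ, t₁ < t₂ ∧ t₂ < t₃ ∧ t₃ < t₄ ∧ t₄ < t₁ + 2 * Real.pi ∧
    a = Circle.exp t₁ ∧ b = Circle.exp t₂ ∧ c = Circle.exp t₃ ∧ d = Circle.exp t₄

/-- Three points of the unit circle in counterclockwise (cyclic) order. -/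
def Ccw3 (a b c : Circle) : Prop :=
  ∃ t₁ t₂ t₃ : ℝ, t₁ < t₂ ∧ t₂ < t₃ ∧ t₃ < t₁ + 2 * Real.pi ∧
    a = Circle.exp t₁ ∧ b = Circle.exp t₂ ∧ c = Circle.exp t₃

/-- The closed counterclockwise arc from `a` to `b` on the circle. -/
def arcCC (a b : Circle) : Set Circle :=
  {z | ∃ t₁ t t₂ : ℝ, t₁ ≤ t ∧ t ≤ t₂ ∧ t₂ < t₁ + 2 * Real.pi ∧
    a = Circle.exp t₁ ∧ z = Circle.exp t ∧ b = Circle.exp t₂}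

/-- The box of geodesics `[a,b] × [c,d]`. -/
def boxSet (a b c d : Circle) : Set (Circle × Circle) := arcCC a b ×ˢ arcCC c d

/-- The space `G` of geodesics of the unit disk: pairs of distinct boundary points. -/
def geodSet : Set (Circle × Circle) := {p | p.1 ≠ p.2}

/-- The cross-ratio of four points of `ℂ`. -/
def cr (a b c d : ℂ) : ℂ := ((a - c) * (b - d)) / ((a - d) * (b - c))

/-- The Liouville measure on the space of geodesics: the pushforward under
`(s,u) ↦ (exp (i s), exp (i u))` of the measure `ds du / |exp(is) - exp(iu)|²`
on a fundamental domain for the periodicity. -/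
def liouville : Measure (Circle × Circle) :=
  Measure.map (fun p : ℝ × ℝ => (Circle.exp p.1, Circle.exp p.2))
    (((volume : Measure (ℝ × ℝ)).restrict
        (Set.Ico 0 (2 * Real.pi) ×ˢ Set.Ico 0 (2 * Real.pi))).withDensity
      fun p : ℝ × ℝ =>
        ENNReal.ofReal
          (1 / ‖Complex.exp ((p.1 : ℂ) * Complex.I) -
            Complex.exp ((p.2 : ℂ) * Complex.I)‖ ^ 2))

/-- `φ : Circle → Circle` is the boundary restriction of a disk Möbius transformation. -/
def IsMobius (φ : Circle → Circle) : Prop :=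
  ∃ α β : ℂ, ‖α‖ ^ 2 - ‖β‖ ^ 2 = 1 ∧
    ∀ z : Circle, (φ z : ℂ) = (α * z + β) / ((starRingEnd ℂ) β * z + (starRingEnd ℂ) α)

/-- A homeomorphism of the circle is orientation-preserving if it preserves the
counterclockwise cyclic order of triples of points. -/
def OrientationPreserving (h : Circle ≃ₜ Circle) : Prop :=
  ∀ a b c : Circle, Ccw3 a b c → Ccw3 (h a) (h b) (h c)

/-- The pullback Liouville current `L_h`, with `L_h (A) = L ((h × h) (A))`. -/
def pullbackCurrent (h : Circle ≃ₜ Circle) : Measure (Circle × Circle) :=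
  Measure.map (⇑(h.prodCongr h).symm) liouville

/-- The quasisymmetric constant `M(h)`: the supremum over symmetric boxes `Q`
(those with `L(Q) = log 2`) of `L((h×h)(Q)) / log 2`. -/
def qsConst (h : Circle ≃ₜ Circle) : ℝ≥0∞ :=
  ⨆ (a : Circle) (b : Circle) (c : Circle) (d : Circle) (_ : Ccw4 a b c d)
    (_ : liouville (boxSet a b c d) = ENNReal.ofReal (Real.log 2)),
    liouville ((fun p : Circle × Circle => (h p.1, h p.2)) '' boxSet a b c d) /
      ENNReal.ofReal (Real.log 2)

/-- `h` is quasisymmetric if its quasisymmetric constant is finite. -/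
def Quasisymmetric (h : Circle ≃ₜ Circle) : Prop := qsConst h < ⊤

/-- A geodesic current: a Radon measure on the space of geodesics, encoded as a Borel
measure on `Circle × Circle` which vanishes on the diagonal and is finite on compact
subsets of the off-diagonal. -/
def IsGeodesicCurrent (μ : Measure (Circle × Circle)) : Prop :=
  μ {p : Circle × Circle | p.1 = p.2} = 0 ∧
    ∀ K : Set (Circle × Circle), IsCompact K → K ⊆ geodSet → μ K < ⊤

/-- A bounded geodesic current. -/
def BoundedCurrent (μ : Measure (Circle × Circle)) : Prop :=
  IsGeodesicCurrent μ ∧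
    ∀ ξ : Circle × Circle → ℝ, Continuous ξ → tsupport ξ ⊆ geodSet →
      ∃ C : ℝ, ∀ φ : Circle → Circle, IsMobius φ → |∫ p, ξ (φ p.1, φ p.2) ∂μ| ≤ C

/-- Uniform weak-star convergence of measures on the space of geodesics. -/
def UnifWeakStarTendsto (μs : ℕ → Measure (Circle × Circle))
    (μ : Measure (Circle × Circle)) : Prop :=
  ∀ ξ : Circle × Circle → ℝ, Continuous ξ → tsupport ξ ⊆ geodSet →
    ∀ ε : ℝ, 0 < ε → ∃ N : ℕ, ∀ n ≥ N, ∀ φ : Circle → Circle, IsMobius φ →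
      |∫ p, ξ (φ p.1, φ p.2) ∂(μs n) - ∫ p, ξ (φ p.1, φ p.2) ∂μ| ≤ ε

/-- A point lies in the (topological) support of a measure. -/
def MemSupport (μ : Measure (Circle × Circle)) (p : Circle × Circle) : Prop :=
  ∀ U : Set (Circle × Circle), IsOpen U → p ∈ U → 0 < μ U

/-- The hyperbolic translation of length `s` along the geodesic from `p` to `q`. -/
def hypTranslate (s : ℝ) (p q w : ℂ) : ℂ :=
  ((Real.exp s : ℂ) * q * (w - p) - p * (w - q)) /
    ((Real.exp s : ℂ) * (w - p) - (w - q))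

/-- `e` is the elementary earthquake of amplitude `s` along the geodesic `(x, y)`
applied to `h`: it agrees with `h` on the closed counterclockwise arc from `x` to `y`,
and with `T_s ∘ h` on the complementary open arc. -/
def IsElemEarthquake (x y : Circle) (s : ℝ) (h e : Circle ≃ₜ Circle) : Prop :=
  (∀ z ∈ arcCC x y, e z = h z) ∧
    ∀ z : Circle, z ∉ arcCC x y → (e z : ℂ) = hypTranslate s (h x) (h y) (h z)

/-- The disk Möbius transformation with parameters `g = (α, β)`. -/
def mobiusFun (g : ℂ × ℂ) : ℂ → ℂ := fun z =>
  (g.1 * z + g.2) / ((starRingEnd ℂ) g.2 * z + (starRingEnd ℂ) g.1)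

/-- Product of Möbius parameters, corresponding to composition of the transformations. -/
def mobiusComp (g₁ g₂ : ℂ × ℂ) : ℂ × ℂ :=
  (g₁.1 * g₂.1 + g₁.2 * (starRingEnd ℂ) g₂.2, g₁.1 * g₂.2 + g₁.2 * (starRingEnd ℂ) g₂.1)

/-- The point `exp (i t)` of the unit circle, as a complex number. -/
def cirexp (t : ℝ) : ℂ := Complex.exp ((t : ℂ) * Complex.I)

/-- The chord length `|exp (i s) - exp (i u)|`. -/
def chord (s u : ℝ) : ℝ := ‖cirexp s - cirexp u‖


/-!
Every disk Möbius transformation `φ` factors as `φ = B ∘ γ` with `γ ∈ Γ` and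
`B z = u (z - k) / (1 - k̄ z)` for some `|u| = 1` and `k ∈ K`: by cocompactness `γ⁻¹` can be
chosen to send a point `k ∈ K` to `φ⁻¹ 0`. By `Γ`-invariance `∫ ξ ∘ φ dαₙ = ∫ ξ ∘ B dαₙ`, so it suffices
to have convergence uniformly over the compact parameter space `S¹ × K`.
The functions `ξ ∘ B` all vanish outside one compact set `T` of geodesics, and a bump `η` equal
to `1` on `T` gives `|∫ f dαₙ - ∫ g dαₙ| ≤ ‖f - g‖∞ ∫ η dαₙ`, where `∫ η dαₙ` converges and is
therefore bounded. Hence the integrals are equicontinuous in the parameter, and pointwise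
convergence on a compact space upgrades to uniform convergence (Ascoli).
-/

open Complex ComplexConjugate

section Mobius

variable {g g₁ g₂ : ℂ × ℂ} {z : ℂ}

def mobiusInv (g : ℂ × ℂ) : ℂ × ℂ := (conj g.1, -g.2)

lemma sq_norm_mobius_num_sub_sq_norm_denom (g : ℂ × ℂ) (z : ℂ) :
    ‖g.1 * z + g.2‖ ^ 2 - ‖conj g.2 * z + conj g.1‖ ^ 2
      = (‖g.1‖ ^ 2 - ‖g.2‖ ^ 2) * (‖z‖ ^ 2 - 1) := by
  simp only [Complex.sq_norm, normSq_add, normSq_conj, map_mul, conj_conj]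
  ring_nf

lemma sq_norm_mobiusComp (g₁ g₂ : ℂ × ℂ) :
    ‖(mobiusComp g₁ g₂).1‖ ^ 2 - ‖(mobiusComp g₁ g₂).2‖ ^ 2
      = (‖g₁.1‖ ^ 2 - ‖g₁.2‖ ^ 2) * (‖g₂.1‖ ^ 2 - ‖g₂.2‖ ^ 2) := by
  simp only [mobiusComp, Complex.sq_norm, normSq_add, normSq_conj, map_mul, conj_conj]
  ring_nf

lemma sq_norm_mobiusInv (g : ℂ × ℂ) :
    ‖(mobiusInv g).1‖ ^ 2 - ‖(mobiusInv g).2‖ ^ 2 = ‖g.1‖ ^ 2 - ‖g.2‖ ^ 2 := by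
  simp [mobiusInv]

lemma mobiusComp_mobiusInv (hg : ‖g.1‖ ^ 2 - ‖g.2‖ ^ 2 = 1) :
    mobiusComp g (mobiusInv g) = (1, 0) := by
  simp only [mobiusComp, mobiusInv, conj_conj, map_neg, Prod.mk.injEq]
  refine ⟨?_, by ring⟩
  rw [mul_neg, ← sub_eq_add_neg, mul_conj, mul_conj, ← ofReal_sub, ← Complex.sq_norm,
    ← Complex.sq_norm, hg, ofReal_one]

lemma mobiusFun_one_zero (z : ℂ) : mobiusFun (1, 0) z = z := by
  simp [mobiusFun]

section
variable (hg : ‖g.1‖ ^ 2 - ‖g.2‖ ^ 2 = 1)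
include hg

lemma norm_snd_lt_norm_fst : ‖g.2‖ < ‖g.1‖ :=
  lt_of_pow_lt_pow_left₀ 2 (norm_nonneg _) (by linarith)

lemma fst_ne_zero : g.1 ≠ 0 :=
  norm_pos_iff.1 ((norm_nonneg _).trans_lt (norm_snd_lt_norm_fst hg))

lemma mobiusFun_denom_ne_zero (hz : ‖z‖ ≤ 1) : conj g.2 * z + conj g.1 ≠ 0 := by
  have hlt : ‖conj g.2 * z‖ < ‖conj g.1‖ := by
    rw [norm_mul, norm_conj, norm_conj]
    exact (mul_le_of_le_one_right (norm_nonneg _) hz).trans_lt (norm_snd_lt_norm_fst hg)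
  rw [add_comm, ← sub_neg_eq_add]
  exact sub_ne_zero.2 fun h => by rw [h, norm_neg] at hlt; exact lt_irrefl _ hlt

lemma norm_mobiusFun_le_one (hz : ‖z‖ ≤ 1) : ‖mobiusFun g z‖ ≤ 1 := by
  have key := sq_norm_mobius_num_sub_sq_norm_denom g z
  rw [hg, one_mul] at key
  rw [mobiusFun, norm_div, div_le_one (norm_pos_iff.2 (mobiusFun_denom_ne_zero hg hz))]
  have hz2 : ‖z‖ ^ 2 ≤ 1 := pow_le_one₀ (norm_nonneg z) hz
  exact (pow_le_pow_iff_left₀ (norm_nonneg _) (norm_nonneg _) two_ne_zero).1 (by linarith)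

lemma norm_mobiusFun_eq_one (hz : ‖z‖ = 1) : ‖mobiusFun g z‖ = 1 := by
  have key := sq_norm_mobius_num_sub_sq_norm_denom g z
  rw [hg, one_mul, hz, one_pow, sub_self, sub_eq_zero] at key
  rw [mobiusFun, norm_div,
    div_eq_one_iff_eq (norm_ne_zero_iff.2 (mobiusFun_denom_ne_zero hg hz.le))]
  exact (pow_left_inj₀ (norm_nonneg _) (norm_nonneg _) two_ne_zero).1 key

end

lemma mobiusFun_mobiusComp (h₁ : ‖g₁.1‖ ^ 2 - ‖g₁.2‖ ^ 2 = 1)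
    (h₂ : ‖g₂.1‖ ^ 2 - ‖g₂.2‖ ^ 2 = 1) (hz : ‖z‖ ≤ 1) :
    mobiusFun (mobiusComp g₁ g₂) z = mobiusFun g₁ (mobiusFun g₂ z) := by
  have hd₂ := mobiusFun_denom_ne_zero h₂ hz
  have hd₁ := mobiusFun_denom_ne_zero h₁ (norm_mobiusFun_le_one h₂ hz)
  have hd := mobiusFun_denom_ne_zero (g := mobiusComp g₁ g₂)
    (by rw [sq_norm_mobiusComp, h₁, h₂, one_mul]) hz
  simp only [mobiusFun, mobiusComp, map_add, map_mul, conj_conj] at hd₁ hd ⊢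
  rw [div_eq_div_iff hd hd₁]
  field_simp
  ring

lemma mobiusFun_mobiusFun_mobiusInv (hg : ‖g.1‖ ^ 2 - ‖g.2‖ ^ 2 = 1) (hz : ‖z‖ ≤ 1) :
    mobiusFun g (mobiusFun (mobiusInv g) z) = z := by
  rw [← mobiusFun_mobiusComp hg (by rwa [sq_norm_mobiusInv]) hz, mobiusComp_mobiusInv hg,
    mobiusFun_one_zero]

end Mobius

section Blaschke

def blaschke (u k z : ℂ) : ℂ := u * ((z - k) / (1 - conj k * z))

lemma mobiusFun_eq_blaschke {g : ℂ × ℂ} {k : ℂ} (hk : g.1 * k + g.2 = 0) (z : ℂ) :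
    mobiusFun g z = blaschke (g.1 / conj g.1) k z := by
  obtain ⟨a, b⟩ := g
  obtain rfl : b = -(a * k) := by linear_combination hk
  simp only [mobiusFun, blaschke, map_neg, map_mul]
  rw [← mul_div_mul_comm]
  congr 1 <;> ring

lemma norm_one_sub_conj_mul {k z : ℂ} (hz : ‖z‖ = 1) : ‖1 - conj k * z‖ = ‖z - k‖ := by
  have : 1 - conj k * z = z * conj (z - k) := by
    rw [map_sub, mul_sub, mul_conj, ← Complex.sq_norm, hz]
    push_cast
    ring
  rw [this, norm_mul, norm_conj, hz, one_mul]

lemma one_sub_conj_mul_ne_zero {k z : ℂ} (hk : ‖k‖ < 1) (hz : ‖z‖ = 1) :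
    1 - conj k * z ≠ 0 := by
  refine sub_ne_zero.2 fun h => ?_
  have := congrArg norm h
  rw [norm_one, norm_mul, norm_conj, hz, mul_one] at this
  exact hk.ne this.symm

lemma norm_blaschke {u k z : ℂ} (hu : ‖u‖ = 1) (hk : ‖k‖ < 1) (hz : ‖z‖ = 1) :
    ‖blaschke u k z‖ = 1 := by
  rw [blaschke, norm_mul, norm_div, ← norm_one_sub_conj_mul hz, hu, one_mul,
    div_self (norm_ne_zero_iff.2 (one_sub_conj_mul_ne_zero hk hz))]

def blaschkeCircle (u : Circle) (k : Metric.ball (0 : ℂ) 1) (z : Circle) : Circle :=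
  ⟨blaschke u k z, mem_sphere_zero_iff_norm.2 <|
    norm_blaschke u.norm_coe (mem_ball_zero_iff.1 k.2) z.norm_coe⟩

lemma continuous_blaschkeCircle : Continuous fun q : (Circle × Metric.ball (0 : ℂ) 1) × Circle =>
    blaschkeCircle q.1.1 q.1.2 q.2 := by
  refine Continuous.subtype_mk (Continuous.mul (by fun_prop)
    (Continuous.div (by fun_prop) (by fun_prop) fun q => ?_)) _
  exact one_sub_conj_mul_ne_zero (mem_ball_zero_iff.1 q.1.2.2) q.2.norm_coe

end Blaschke

def mobiusCircle (g : ℂ × ℂ) (hg : ‖g.1‖ ^ 2 - ‖g.2‖ ^ 2 = 1) : C(Circle, Circle) where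
  toFun z := ⟨mobiusFun g z, mem_sphere_zero_iff_norm.2 (norm_mobiusFun_eq_one hg z.norm_coe)⟩
  continuous_toFun := by
    refine Continuous.subtype_mk (Continuous.div (by fun_prop) (by fun_prop) fun z => ?_) _
    exact mobiusFun_denom_ne_zero hg z.norm_coe.le

lemma exists_mobiusFun_eq_blaschke_comp {Γ : Set (ℂ × ℂ)} {K : Set ℂ}
    (hnorm : ∀ g ∈ Γ, ‖g.1‖ ^ 2 - ‖g.2‖ ^ 2 = 1) (hinv : ∀ g ∈ Γ, mobiusInv g ∈ Γ)
    (hKD : K ⊆ Metric.ball (0 : ℂ) 1)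
    (hcover : Metric.ball (0 : ℂ) 1 ⊆ ⋃ g ∈ Γ, mobiusFun g '' K)
    {φ : ℂ × ℂ} (hφ : ‖φ.1‖ ^ 2 - ‖φ.2‖ ^ 2 = 1) :
    ∃ u : Circle, ∃ k ∈ K, ∃ γ ∈ Γ, ∀ z : ℂ, ‖z‖ = 1 →
      mobiusFun φ z = blaschke u k (mobiusFun γ z) := by
  have hw : -φ.2 / φ.1 ∈ Metric.ball (0 : ℂ) 1 := by
    rw [mem_ball_zero_iff, norm_div, norm_neg,
      div_lt_one ((norm_nonneg _).trans_lt (norm_snd_lt_norm_fst hφ))]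
    exact norm_snd_lt_norm_fst hφ
  obtain ⟨g, hg, k, hk, hgk⟩ : ∃ g ∈ Γ, ∃ k ∈ K, mobiusFun g k = -φ.2 / φ.1 := by
    simpa using hcover hw
  have hk1 : ‖k‖ ≤ 1 := (mem_ball_zero_iff.1 (hKD hk)).le
  set h := mobiusComp φ g
  have hh : ‖h.1‖ ^ 2 - ‖h.2‖ ^ 2 = 1 := by rw [sq_norm_mobiusComp, hφ, hnorm g hg, one_mul]
  have hhk : h.1 * k + h.2 = 0 := by
    have : mobiusFun h k = 0 := by
      rw [mobiusFun_mobiusComp hφ (hnorm g hg) hk1, hgk, mobiusFun,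
        mul_div_cancel₀ _ (fst_ne_zero hφ), neg_add_cancel, zero_div]
    rwa [mobiusFun, div_eq_zero_iff, or_iff_left (mobiusFun_denom_ne_zero hh hk1)] at this
  refine ⟨Circle.ofConjDivSelf (conj h.1) ((map_ne_zero _).2 (fst_ne_zero hh)), k, hk,
    mobiusInv g, hinv g hg, fun z hz => ?_⟩
  have hinvg : ‖(mobiusInv g).1‖ ^ 2 - ‖(mobiusInv g).2‖ ^ 2 = 1 := by
    rw [sq_norm_mobiusInv, hnorm g hg]
  calc mobiusFun φ z = mobiusFun φ (mobiusFun g (mobiusFun (mobiusInv g) z)) := by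
        rw [mobiusFun_mobiusFun_mobiusInv (hnorm g hg) hz.le]
    _ = mobiusFun h (mobiusFun (mobiusInv g) z) :=
        (mobiusFun_mobiusComp hφ (hnorm g hg) (norm_mobiusFun_eq_one hinvg hz).le).symm
    _ = _ := by rw [mobiusFun_eq_blaschke hhk, Circle.ofConjDivSelf_coe, conj_conj]

section WeakStar

variable {X : Type*} [TopologicalSpace X] [CompactSpace X] [MeasurableSpace X]
  {U : Set X} {μ : Measure X}

lemma integrable_of_tsupport_subset [OpensMeasurableSpace X]
    (hμ : ∀ K, IsCompact K → K ⊆ U → μ K < ⊤) (f : C(X, ℝ)) (hfU : tsupport f ⊆ U) :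
    Integrable f μ := by
  have hfin : μ (tsupport f) ≠ ⊤ := (hμ _ (isClosed_tsupport f).isCompact hfU).ne
  refine (integrableOn_iff_integrable_of_support_subset (subset_tsupport f)).1 ?_
  exact Measure.integrableOn_of_bounded hfin f.continuous.aestronglyMeasurable
    (M := ‖f‖) (ae_of_all _ f.norm_coe_le_norm)

lemma abs_integral_sub_le_norm_mul_integral {f g η : C(X, ℝ)} {T : Set X}
    (hf : Function.support f ⊆ T) (hg : Function.support g ⊆ T) (hη : EqOn η 1 T)
    (hη₀ : ∀ x, 0 ≤ η x) (hfi : Integrable f μ) (hgi : Integrable g μ)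
    (hηi : Integrable η μ) :
    |∫ x, f x ∂μ - ∫ x, g x ∂μ| ≤ ‖f - g‖ * ∫ x, η x ∂μ := by
  calc |∫ x, f x ∂μ - ∫ x, g x ∂μ| = ‖∫ x, (f x - g x) ∂μ‖ := by
        rw [integral_sub hfi hgi, Real.norm_eq_abs]
    _ ≤ ∫ x, ‖f - g‖ * η x ∂μ :=
        norm_integral_le_of_norm_le (hηi.const_mul _) (ae_of_all _ fun x => ?_)
    _ = ‖f - g‖ * ∫ x, η x ∂μ := integral_const_mul _ _
  by_cases hx : x ∈ T
  · simpa [hη hx] using (f - g).norm_coe_le_norm x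
  · rw [Function.notMem_support.1 fun h => hx (hf h),
      Function.notMem_support.1 fun h => hx (hg h), sub_zero, norm_zero]
    exact mul_nonneg (norm_nonneg _) (hη₀ x)

theorem tendstoUniformly_integral_of_tendsto_integral [OpensMeasurableSpace X] [T2Space X]
    {P : Type*} [TopologicalSpace P] [CompactSpace P] (hU : IsOpen U) {μs : ℕ → Measure X}
    (hμs : ∀ n K, IsCompact K → K ⊆ U → μs n K < ⊤)
    (hweak : ∀ f : X → ℝ, Continuous f → tsupport f ⊆ U →
      Tendsto (fun n => ∫ x, f x ∂(μs n)) atTop (𝓝 (∫ x, f x ∂μ)))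
    (F : C(P × X, ℝ)) (hFU : tsupport F ⊆ univ ×ˢ U) :
    TendstoUniformly (fun n p => ∫ x, F (p, x) ∂(μs n)) (fun p => ∫ x, F (p, x) ∂μ) atTop := by
  set T := Prod.snd '' tsupport F
  have hT : IsCompact T := (isClosed_tsupport F).isCompact.image continuous_snd
  have hTU : T ⊆ U := by
    rintro _ ⟨q, hq, rfl⟩
    exact (hFU hq).2
  let Φ : C(P, C(X, ℝ)) := F.curry
  have hΦT : ∀ p, tsupport (Φ p) ⊆ T := fun p x hx =>
    ⟨(p, x), tsupport_comp_subset_preimage (f := fun x => (p, x)) F (by fun_prop) hx, rfl⟩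
  obtain ⟨η, hηU, hη1, hη01⟩ :=
    exists_tsupport_one_of_isOpen_isClosed hU isClosed_closure.isCompact hT.isClosed hTU
  obtain ⟨M, hM⟩ := (hweak η η.continuous hηU).bddAbove_range
  have hM₀ : 0 ≤ M := (integral_nonneg fun x => (hη01 x).1).trans (hM ⟨0, rfl⟩)
  have hequi : Equicontinuous fun n p => ∫ x, Φ p x ∂(μs n) := by
    intro p₀
    rw [Metric.equicontinuousAt_iff_right]
    intro ε hε
    have hδ : 0 < ε / (M + 1) := by positivity
    filter_upwards [Metric.tendsto_nhds.1 (Φ.continuous.tendsto p₀) _ hδ] with p hp n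
    have hηn : ∫ x, η x ∂(μs n) ≤ M := hM ⟨n, rfl⟩
    calc dist (∫ x, Φ p₀ x ∂(μs n)) (∫ x, Φ p x ∂(μs n))
        ≤ ‖Φ p₀ - Φ p‖ * ∫ x, η x ∂(μs n) :=
          abs_integral_sub_le_norm_mul_integral ((subset_tsupport _).trans (hΦT p₀))
            ((subset_tsupport _).trans (hΦT p)) hη1 (fun x => (hη01 x).1)
            (integrable_of_tsupport_subset (hμs n) _ ((hΦT p₀).trans hTU))
            (integrable_of_tsupport_subset (hμs n) _ ((hΦT p).trans hTU))
            (integrable_of_tsupport_subset (hμs n) _ hηU)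
      _ ≤ ε / (M + 1) * M := by
          rw [dist_comm, dist_eq_norm] at hp
          exact mul_le_mul hp.le hηn (integral_nonneg fun x => (hη01 x).1) hδ.le
      _ < ε := by rw [div_mul_eq_mul_div, div_lt_iff₀ (by positivity)]; nlinarith
  refine UniformFun.tendsto_iff_tendstoUniformly.1
    ((hequi.tendsto_uniformFun_iff_pi atTop _).2 (tendsto_pi_nhds.2 fun p => ?_))
  exact hweak (Φ p) (Φ p).continuous ((hΦT p).trans hTU)

end WeakStar

lemma integral_comp_eq_of_preimage_eq {Y : Type*} [MeasurableSpace Y] {μ : Measure Y}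
    {T : Y → Y} (hT : Measurable T) (hμ : ∀ A, MeasurableSet A → μ (T ⁻¹' A) = μ A)
    {f : Y → ℝ} (hf : AEStronglyMeasurable f μ) :
    ∫ y, f (T y) ∂μ = ∫ y, f y ∂μ := by
  have hmap : μ.map T = μ := Measure.ext fun A hA => by rw [Measure.map_apply hT hA, hμ A hA]
  conv_rhs => rw [← hmap]
  exact (integral_map hT.aemeasurable (hmap.symm ▸ hf)).symm

lemma tsupport_comp_subset_univ_prod_geodSet {P : Type*} [TopologicalSpace P]
    {B : P → Circle → Circle} (hB : Continuous fun q : P × Circle => B q.1 q.2)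
    {ξ : Circle × Circle → ℝ} (hξU : tsupport ξ ⊆ geodSet) :
    tsupport (fun q : P × (Circle × Circle) => ξ (B q.1 q.2.1, B q.1 q.2.2)) ⊆
      univ ×ˢ geodSet := fun q hq =>
  ⟨trivial, fun h => hξU (tsupport_comp_subset_preimage ξ
    (f := fun q : P × (Circle × Circle) => (B q.1 q.2.1, B q.1 q.2.2)) (by fun_prop) hq)
    (by simp only [h])⟩

theorem stmt15_general (Γ : Set (ℂ × ℂ))
    (hnorm : ∀ g ∈ Γ, ‖g.1‖ ^ 2 - ‖g.2‖ ^ 2 = 1)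
    (hinv : ∀ g ∈ Γ, ((starRingEnd ℂ) g.1, -g.2) ∈ Γ)
    (K : Set ℂ) (hK : IsCompact K) (hKD : K ⊆ Metric.ball (0 : ℂ) 1)
    (hcover : (⋃ g ∈ Γ, mobiusFun g '' K) = Metric.ball (0 : ℂ) 1)
    (αs : ℕ → Measure (Circle × Circle)) (α : Measure (Circle × Circle))
    (hαs : ∀ n, IsGeodesicCurrent (αs n))
    (hinvars : ∀ n, ∀ g ∈ Γ, ∀ φ : Circle → Circle,
      (∀ z : Circle, (φ z : ℂ) = mobiusFun g (z : ℂ)) →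
      ∀ A : Set (Circle × Circle), MeasurableSet A →
        (αs n) ((fun p : Circle × Circle => (φ p.1, φ p.2)) ⁻¹' A) = (αs n) A)
    (hinvar : ∀ g ∈ Γ, ∀ φ : Circle → Circle,
      (∀ z : Circle, (φ z : ℂ) = mobiusFun g (z : ℂ)) →
      ∀ A : Set (Circle × Circle), MeasurableSet A →
        α ((fun p : Circle × Circle => (φ p.1, φ p.2)) ⁻¹' A) = α A)
    (hweak : ∀ ξ : Circle × Circle → ℝ, Continuous ξ → tsupport ξ ⊆ geodSet →
      Tendsto (fun n => ∫ p, ξ p ∂(αs n)) atTop (𝓝 (∫ p, ξ p ∂α))) :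
    UnifWeakStarTendsto αs α := by
  intro ξ hξ hξU ε hε
  have : CompactSpace K := isCompact_iff_compactSpace.1 hK
  let B : Circle × K → Circle → Circle := fun q => blaschkeCircle q.1 (Set.inclusion hKD q.2)
  have hB : Continuous fun q : (Circle × K) × Circle => B q.1 q.2 :=
    continuous_blaschkeCircle.comp <| (continuous_fst.fst.prodMk
      ((continuous_inclusion hKD).comp continuous_fst.snd)).prodMk continuous_snd
  let F : C((Circle × K) × (Circle × Circle), ℝ) :=
    ⟨fun q => ξ (B q.1 q.2.1, B q.1 q.2.2), by fun_prop⟩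
  obtain ⟨N, hN⟩ := eventually_atTop.1 <| Metric.tendstoUniformly_iff.1
    (tendstoUniformly_integral_of_tendsto_integral (isOpen_ne_fun continuous_fst continuous_snd)
      (fun n => (hαs n).2) hweak F (tsupport_comp_subset_univ_prod_geodSet hB hξU)) ε hε
  refine ⟨N, fun n hn φ ⟨a, b, hab, hφ⟩ => ?_⟩
  obtain ⟨u, k, hk, g, hg, hdec⟩ :=
    exists_mobiusFun_eq_blaschke_comp (φ := (a, b)) hnorm hinv hKD hcover.superset hab
  let γ := mobiusCircle g (hnorm g hg)
  have hφB : ∀ z, φ z = B (u, ⟨k, hk⟩) (γ z) :=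
    fun z => Circle.coe_injective ((hφ z).trans (hdec z z.norm_coe))
  have hint : ∀ μ : Measure (Circle × Circle), (∀ A, MeasurableSet A →
      μ ((fun p : Circle × Circle => (γ p.1, γ p.2)) ⁻¹' A) = μ A) →
      ∫ p, ξ (φ p.1, φ p.2) ∂μ = ∫ p, F ((u, ⟨k, hk⟩), p) ∂μ := fun μ hμ => by
    simp only [hφB]
    exact integral_comp_eq_of_preimage_eq (γ.continuous.prodMap γ.continuous).measurable hμ
      (F.continuous.comp (continuous_const.prodMk continuous_id)).aestronglyMeasurable
  rw [hint _ (hinvars n g hg γ fun _ => rfl), hint _ (hinvar g hg γ fun _ => rfl), abs_sub_comm,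
    ← Real.dist_eq]
  exact (hN n hn (u, ⟨k, hk⟩)).le

/-- for a cocompact group `Γ` of disk Möbius transformations, weak-star
convergence of `Γ`-invariant Radon measures implies uniform weak-star convergence. -/
theorem stmt15 (Γ : Set (ℂ × ℂ))
    (hnorm : ∀ g ∈ Γ, ‖g.1‖ ^ 2 - ‖g.2‖ ^ 2 = 1)
    (hone : ((1 : ℂ), (0 : ℂ)) ∈ Γ)
    (hmul : ∀ g₁ ∈ Γ, ∀ g₂ ∈ Γ, mobiusComp g₁ g₂ ∈ Γ)
    (hinv : ∀ g ∈ Γ, ((starRingEnd ℂ) g.1, -g.2) ∈ Γ)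
    (K : Set ℂ) (hK : IsCompact K) (hKD : K ⊆ Metric.ball (0 : ℂ) 1)
    (hcover : (⋃ g ∈ Γ, mobiusFun g '' K) = Metric.ball (0 : ℂ) 1)
    (αs : ℕ → Measure (Circle × Circle)) (α : Measure (Circle × Circle))
    (hαs : ∀ n, IsGeodesicCurrent (αs n)) (hα : IsGeodesicCurrent α)
    (hinvars : ∀ n, ∀ g ∈ Γ, ∀ φ : Circle → Circle,
      (∀ z : Circle, (φ z : ℂ) = mobiusFun g (z : ℂ)) →
      ∀ A : Set (Circle × Circle), MeasurableSet A →
        (αs n) ((fun p : Circle × Circle => (φ p.1, φ p.2)) ⁻¹' A) = (αs n) A)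
    (hinvar : ∀ g ∈ Γ, ∀ φ : Circle → Circle,
      (∀ z : Circle, (φ z : ℂ) = mobiusFun g (z : ℂ)) →
      ∀ A : Set (Circle × Circle), MeasurableSet A →
        α ((fun p : Circle × Circle => (φ p.1, φ p.2)) ⁻¹' A) = α A)
    (hweak : ∀ ξ : Circle × Circle → ℝ, Continuous ξ → tsupport ξ ⊆ geodSet →
      Tendsto (fun n => ∫ p, ξ p ∂(αs n)) atTop (𝓝 (∫ p, ξ p ∂α))) :
    UnifWeakStarTendsto αs α :=
  stmt15_general Γ hnorm hinv K hK hKD hcover αs α hαs hinvars hinvar hweak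
end
end

section
/- For all real numbers t₁ < t₂ < t₃ < t₄ < t₁ + 2π, the double integral ∫_{s=t₁}^{t₂} ∫_{u=t₃}^{t₄} 1/|exp(is) − exp(iu)|² du ds equals log( (|exp(it₁) − exp(it₃)| · |exp(it₂) − exp(it₄)|) / (|exp(it₁) − exp(it₄)| · |exp(it₂) − exp(it₃)|) ), i.e., the logarithm of the cross-ratio cr(a,b,c,d) = ((a−c)(b−d))/((a−d)(b−c)) of the points a = exp(it₁), b = exp(it₂), c = exp(it₃), d = exp(it₄) on the unit circle, which is a positive real number. -/
open MeasureTheory Filter Topology Set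
open scoped ENNReal

noncomputable section

private lemma cirexp_sub (s u : ℝ) :
    cirexp s - cirexp u =
      Complex.exp ((((s + u) / 2 : ℝ) : ℂ) * Complex.I) *
        (2 * (Real.sin ((s - u) / 2) : ℂ) * Complex.I) := by
  have h1 : (s : ℂ) * Complex.I =
      (((s + u) / 2 : ℝ) : ℂ) * Complex.I + (((s - u) / 2 : ℝ) : ℂ) * Complex.I := by
    push_cast; ring
  have h2 : (u : ℂ) * Complex.I =
      (((s + u) / 2 : ℝ) : ℂ) * Complex.I + ((-((s - u) / 2) : ℝ) : ℂ) * Complex.I := by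
    push_cast; ring
  rw [cirexp, cirexp, h1, h2, Complex.exp_add, Complex.exp_add, ← mul_sub]
  congr 1
  rw [Complex.exp_mul_I, Complex.exp_mul_I]
  push_cast
  rw [Complex.cos_neg, Complex.sin_neg]
  ring

private lemma chord_eq (s u : ℝ) : chord s u = 2 * |Real.sin ((s - u) / 2)| := by
  rw [chord, cirexp_sub, norm_mul, Complex.norm_exp_ofReal_mul_I, one_mul, norm_mul, norm_mul,
    Complex.norm_I, Complex.norm_real, Real.norm_eq_abs, Complex.norm_two, mul_one]

private lemma chord_sq (s u : ℝ) : chord s u ^ 2 = 4 * Real.sin ((s - u) / 2) ^ 2 := by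
  rw [chord_eq, mul_pow, sq_abs]; ring

private lemma sin_half_neg {x : ℝ} (h1 : -(2 * Real.pi) < x) (h2 : x < 0) :
    Real.sin (x / 2) < 0 :=
  Real.sin_neg_of_neg_of_neg_pi_lt (by linarith) (by linarith)

private lemma hasDerivAt_inner (s : ℝ) (u : ℝ) (hne : Real.sin ((s - u) / 2) ≠ 0) :
    HasDerivAt (fun u : ℝ => Real.cos ((s - u) / 2) / (2 * Real.sin ((s - u) / 2)))
      ((4 * Real.sin ((s - u) / 2) ^ 2)⁻¹) u := by
  have hg : HasDerivAt (fun u : ℝ => (s - u) / 2) (-1 / 2) u := by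
    simpa using ((hasDerivAt_id u).const_sub s).div_const 2
  have hcos := hg.cos
  have hsin := hg.sin.const_mul (2 : ℝ)
  have hd : (2 : ℝ) * Real.sin ((s - u) / 2) ≠ 0 := by
    simp [hne]
  have := hcos.div hsin hd
  refine this.congr_deriv ?_
  have h1 := Real.sin_sq_add_cos_sq ((s - u) / 2)
  field_simp
  nlinarith [h1]

private lemma hasDerivAt_outer (u : ℝ) (s : ℝ) (hne : Real.sin ((s - u) / 2) < 0) :
    HasDerivAt (fun s : ℝ => Real.log (-Real.sin ((s - u) / 2)))
      (Real.cos ((s - u) / 2) / (2 * Real.sin ((s - u) / 2))) s := by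
  have hg : HasDerivAt (fun s : ℝ => (s - u) / 2) (1 / 2) s := by
    simpa using ((hasDerivAt_id s).sub_const u).div_const 2
  have hsin := hg.sin.neg
  have := hsin.log (by linarith : -Real.sin ((s - u) / 2) ≠ 0)
  refine this.congr_deriv ?_
  simp only [Pi.neg_apply]
  rw [neg_div_neg_eq]
  ring

private lemma inner_int {t₃ t₄ : ℝ} (s : ℝ) (h34 : t₃ ≤ t₄)
    (hlo : -(2 * Real.pi) < s - t₄) (hhi : s - t₃ < 0) :
    ∫ u in t₃..t₄, 1 / chord s u ^ 2 =
      Real.cos ((s - t₄) / 2) / (2 * Real.sin ((s - t₄) / 2)) -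
        Real.cos ((s - t₃) / 2) / (2 * Real.sin ((s - t₃) / 2)) := by
  have hneg : ∀ u ∈ Set.uIcc t₃ t₄, Real.sin ((s - u) / 2) < 0 := by
    intro u hu
    rw [Set.uIcc_of_le h34] at hu
    exact sin_half_neg (by linarith [hu.2]) (by linarith [hu.1])
  have hcongr : ∀ u : ℝ, 1 / chord s u ^ 2 = (4 * Real.sin ((s - u) / 2) ^ 2)⁻¹ := by
    intro u; rw [chord_sq, one_div]
  simp_rw [hcongr]
  apply intervalIntegral.integral_eq_sub_of_hasDerivAt
  · intro u hu
    exact hasDerivAt_inner s u (hneg u hu).ne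
  · apply ContinuousOn.intervalIntegrable
    apply ContinuousOn.inv₀
    · fun_prop
    · intro u hu
      exact mul_ne_zero four_ne_zero (pow_ne_zero 2 (hneg u hu).ne)

/-- the Liouville mass of a box equals the logarithm of the cross-ratio of
the four counterclockwise boundary points determining it. -/
theorem stmt16 (t₁ t₂ t₃ t₄ : ℝ) (h₁₂ : t₁ < t₂) (h₂₃ : t₂ < t₃) (h₃₄ : t₃ < t₄)
    (h₄₁ : t₄ < t₁ + 2 * Real.pi) :
    (∫ s in t₁..t₂, ∫ u in t₃..t₄, 1 / chord s u ^ 2) =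
      Real.log ((chord t₁ t₃ * chord t₂ t₄) / (chord t₁ t₄ * chord t₂ t₃)) ∧
    0 < (chord t₁ t₃ * chord t₂ t₄) / (chord t₁ t₄ * chord t₂ t₃) ∧
    cr (cirexp t₁) (cirexp t₂) (cirexp t₃) (cirexp t₄) =
      (((chord t₁ t₃ * chord t₂ t₄) / (chord t₁ t₄ * chord t₂ t₃) : ℝ) : ℂ) := by
  have n13 : Real.sin ((t₁ - t₃) / 2) < 0 := sin_half_neg (by linarith) (by linarith)
  have n14 : Real.sin ((t₁ - t₄) / 2) < 0 := sin_half_neg (by linarith) (by linarith)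
  have n23 : Real.sin ((t₂ - t₃) / 2) < 0 := sin_half_neg (by linarith) (by linarith)
  have n24 : Real.sin ((t₂ - t₄) / 2) < 0 := sin_half_neg (by linarith) (by linarith)
  have c13 : chord t₁ t₃ = 2 * -Real.sin ((t₁ - t₃) / 2) := by
    rw [chord_eq, abs_of_neg n13]
  have c14 : chord t₁ t₄ = 2 * -Real.sin ((t₁ - t₄) / 2) := by
    rw [chord_eq, abs_of_neg n14]
  have c23 : chord t₂ t₃ = 2 * -Real.sin ((t₂ - t₃) / 2) := by
    rw [chord_eq, abs_of_neg n23]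
  have c24 : chord t₂ t₄ = 2 * -Real.sin ((t₂ - t₄) / 2) := by
    rw [chord_eq, abs_of_neg n24]
  have p13 : (0:ℝ) < -Real.sin ((t₁ - t₃) / 2) := by linarith
  have p14 : (0:ℝ) < -Real.sin ((t₁ - t₄) / 2) := by linarith
  have p23 : (0:ℝ) < -Real.sin ((t₂ - t₃) / 2) := by linarith
  have p24 : (0:ℝ) < -Real.sin ((t₂ - t₄) / 2) := by linarith
  have hratio : (chord t₁ t₃ * chord t₂ t₄) / (chord t₁ t₄ * chord t₂ t₃) =
      (-Real.sin ((t₁ - t₃) / 2) * -Real.sin ((t₂ - t₄) / 2)) /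
        (-Real.sin ((t₁ - t₄) / 2) * -Real.sin ((t₂ - t₃) / 2)) := by
    rw [c13, c14, c23, c24,
      div_eq_div_iff (ne_of_gt (by nlinarith)) (ne_of_gt (mul_pos p14 p23))]
    ring
  have hpos : 0 < (chord t₁ t₃ * chord t₂ t₄) / (chord t₁ t₄ * chord t₂ t₃) := by
    rw [hratio]; exact div_pos (mul_pos p13 p24) (mul_pos p14 p23)
  refine ⟨?_, hpos, ?_⟩
  · -- the integral
    have houter : (∫ s in t₁..t₂, ∫ u in t₃..t₄, 1 / chord s u ^ 2) =
        (Real.log (-Real.sin ((t₂ - t₄) / 2)) - Real.log (-Real.sin ((t₂ - t₃) / 2))) -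
          (Real.log (-Real.sin ((t₁ - t₄) / 2)) - Real.log (-Real.sin ((t₁ - t₃) / 2))) := by
      have hrw : Set.EqOn (fun s => ∫ u in t₃..t₄, 1 / chord s u ^ 2)
          (fun s => Real.cos ((s - t₄) / 2) / (2 * Real.sin ((s - t₄) / 2)) -
            Real.cos ((s - t₃) / 2) / (2 * Real.sin ((s - t₃) / 2)))
          (Set.uIcc t₁ t₂) := by
        intro s hs
        rw [Set.uIcc_of_le h₁₂.le] at hs
        exact inner_int s h₃₄.le (by linarith [hs.1]) (by linarith [hs.2])
      rw [intervalIntegral.integral_congr hrw]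
      have hsins : ∀ s ∈ Set.Icc t₁ t₂,
          Real.sin ((s - t₄) / 2) < 0 ∧ Real.sin ((s - t₃) / 2) < 0 := by
        intro s hs
        exact ⟨sin_half_neg (by linarith [hs.1]) (by linarith [hs.2]),
          sin_half_neg (by linarith [hs.1]) (by linarith [hs.2])⟩
      have key : ∀ s ∈ Set.uIcc t₁ t₂,
          HasDerivAt (fun s => Real.log (-Real.sin ((s - t₄) / 2)) -
            Real.log (-Real.sin ((s - t₃) / 2)))
            (Real.cos ((s - t₄) / 2) / (2 * Real.sin ((s - t₄) / 2)) -
              Real.cos ((s - t₃) / 2) / (2 * Real.sin ((s - t₃) / 2))) s := by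
        intro s hs
        rw [Set.uIcc_of_le h₁₂.le] at hs
        exact (hasDerivAt_outer t₄ s (hsins s hs).1).sub (hasDerivAt_outer t₃ s (hsins s hs).2)
      rw [intervalIntegral.integral_eq_sub_of_hasDerivAt key ?_]
      apply ContinuousOn.intervalIntegrable
      apply ContinuousOn.sub <;>
      · apply ContinuousOn.div
        · fun_prop
        · fun_prop
        · intro s hs
          rw [Set.uIcc_of_le h₁₂.le] at hs
          have := hsins s hs
          first
          | exact mul_ne_zero two_ne_zero this.1.ne
          | exact mul_ne_zero two_ne_zero this.2.ne
    rw [houter, hratio, Real.log_div (mul_pos p13 p24).ne' (mul_pos p14 p23).ne',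
      Real.log_mul p13.ne' p24.ne', Real.log_mul p14.ne' p23.ne']
    ring
  · -- the cross-ratio
    have key : Complex.exp ((((t₁ + t₃) / 2 : ℝ) : ℂ) * Complex.I) *
        Complex.exp ((((t₂ + t₄) / 2 : ℝ) : ℂ) * Complex.I) =
        Complex.exp ((((t₁ + t₄) / 2 : ℝ) : ℂ) * Complex.I) *
          Complex.exp ((((t₂ + t₃) / 2 : ℝ) : ℂ) * Complex.I) := by
      rw [← Complex.exp_add, ← Complex.exp_add]
      congr 1
      push_cast
      ring
    have hratio' : (((chord t₁ t₃ * chord t₂ t₄) / (chord t₁ t₄ * chord t₂ t₃) : ℝ) : ℂ) =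
        ((Real.sin ((t₁ - t₃) / 2) : ℂ) * (Real.sin ((t₂ - t₄) / 2) : ℂ)) /
          ((Real.sin ((t₁ - t₄) / 2) : ℂ) * (Real.sin ((t₂ - t₃) / 2) : ℂ)) := by
      rw [hratio]
      push_cast
      ring
    rw [hratio', cr, cirexp_sub t₁ t₃, cirexp_sub t₂ t₄, cirexp_sub t₁ t₄, cirexp_sub t₂ t₃]
    rw [div_eq_div_iff]
    · linear_combination (4 * Complex.I ^ 2 * (Real.sin ((t₁ - t₃) / 2) : ℂ) *
        (Real.sin ((t₂ - t₄) / 2) : ℂ) * (Real.sin ((t₁ - t₄) / 2) : ℂ) *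
        (Real.sin ((t₂ - t₃) / 2) : ℂ)) * key
    · apply mul_ne_zero <;> apply mul_ne_zero
      · exact Complex.exp_ne_zero _
      · apply mul_ne_zero (mul_ne_zero two_ne_zero ?_) Complex.I_ne_zero
        exact_mod_cast n14.ne
      · exact Complex.exp_ne_zero _
      · apply mul_ne_zero (mul_ne_zero two_ne_zero ?_) Complex.I_ne_zero
        exact_mod_cast n23.ne
    · apply mul_ne_zero
      · exact_mod_cast n14.ne
      · exact_mod_cast n23.ne
end
end
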